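/- Equivalence of in-control detection via the reflected chart: with 0 < k_U ≤ h, increments (ℓ_t), upper chart R_t (R₀ = h, R_t = min(max(R_{t−1}+ℓ_t,0),h)) and the classical CUSUM with negated increments S_t (S₀ = 0, S_t = max(S_{t−1} − ℓ_t, 0)), one has inf{t ≥ 1 : S_t ≥ k_U} = inf{t ≥ 1 : R_t ≤ h − k_U}. -/

import Mathlib

/-! The reflection `Q_t = h - R_t` turns the upper chart started at `h` into the chart of the
negated increments started at `0`, i.e. a CUSUM capped at `h`. The capped CUSUM never exceeds the
classical one, and the two agree (up to the cap) as long as the classical one has stayed below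
`h`; since `k_U ≤ h`, this is the case up to and including the first time the classical CUSUM
reaches `k_U`. -/

noncomputable def chart (h : ℝ) (ℓ : ℕ → ℝ) (x : ℝ) : ℕ → ℝ
  | 0 => x
  | t + 1 => min (max (chart h ℓ x t + ℓ (t + 1)) 0) h

noncomputable def classicalCusum (ℓ : ℕ → ℝ) : ℕ → ℝ
  | 0 => 0
  | t + 1 => max (classicalCusum ℓ t + ℓ (t + 1)) 0

lemma sub_min_max_zero {h : ℝ} (hh : 0 ≤ h) (y : ℝ) :
    h - min (max y 0) h = min (max (h - y) 0) h := by
  simp only [max_def, min_def]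
  split_ifs <;> linarith

lemma sub_chart {h : ℝ} (hh : 0 ≤ h) (ℓ : ℕ → ℝ) (x : ℝ) (t : ℕ) :
    h - chart h ℓ x t = chart h (fun s => -ℓ s) (h - x) t := by
  induction t with
  | zero => rfl
  | succ t ih =>
    rw [chart, chart, sub_min_max_zero hh, ← ih, sub_add_eq_sub_sub, sub_eq_add_neg _ (ℓ _)]

lemma chart_zero_le_classicalCusum (h : ℝ) (ℓ : ℕ → ℝ) (t : ℕ) :
    chart h ℓ 0 t ≤ classicalCusum ℓ t := by
  induction t with
  | zero => rfl
  | succ t ih =>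
    rw [chart, classicalCusum]
    exact (min_le_left _ _).trans (by gcongr)

lemma min_classicalCusum_le_chart_zero {h : ℝ} {ℓ : ℕ → ℝ} {t : ℕ}
    (hS : ∀ s < t, classicalCusum ℓ s ≤ h) : min (classicalCusum ℓ t) h ≤ chart h ℓ 0 t := by
  induction t with
  | zero => exact min_le_left _ _
  | succ t ih =>
    have hSc := ih fun s hs => hS s (hs.trans t.lt_succ_self)
    rw [min_eq_left (hS t t.lt_succ_self)] at hSc
    rw [chart, classicalCusum]
    gcongr

theorem in_control_detection_reflected (h kU : ℝ) (hh : 0 < h) (hk0 : 0 < kU)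
    (hkh : kU ≤ h) (ℓ : ℕ → ℝ) :
    sInf ((fun t : ℕ => (t : ℕ∞)) ''
        {t : ℕ | 1 ≤ t ∧ kU ≤ classicalCusum (fun s => -ℓ s) t})
      = sInf ((fun t : ℕ => (t : ℕ∞)) ''
        {t : ℕ | 1 ≤ t ∧ chart h ℓ h t ≤ h - kU}) := by
  set S := classicalCusum (fun s => -ℓ s)
  set Q := chart h (fun s => -ℓ s) 0
  have hRQ (t : ℕ) : chart h ℓ h t ≤ h - kU ↔ kU ≤ Q t := by
    have := sub_chart hh.le ℓ h t
    rw [sub_self] at this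
    constructor <;> intro <;> linarith
  refine le_antisymm (sInf_le_sInf (Set.image_mono fun t ⟨ht1, ht⟩ =>
    ⟨ht1, ((hRQ t).1 ht).trans (chart_zero_le_classicalCusum h _ t)⟩)) (le_sInf ?_)
  rintro _ ⟨a, ⟨-, ha⟩, rfl⟩
  have hex : ∃ t, kU ≤ S t := ⟨a, ha⟩
  have hbefore (s : ℕ) (hs : s < Nat.find hex) : S s ≤ h :=
    ((not_le.1 (Nat.find_min hex hs)).trans_le hkh).le
  have hpos : 1 ≤ Nat.find hex :=
    Nat.one_le_iff_ne_zero.2 fun h0 =>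
      (show kU ≤ S 0 from h0 ▸ Nat.find_spec hex).not_gt hk0
  have hQ : kU ≤ Q (Nat.find hex) :=
    (le_min (Nat.find_spec hex) hkh).trans (min_classicalCusum_le_chart_zero hbefore)
  exact sInf_le_of_le ⟨_, ⟨hpos, (hRQ _).2 hQ⟩, rfl⟩ (Nat.cast_le.2 (Nat.find_min' hex ha))
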